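/- arXiv:1504.00998 — 4 statements merged into one kernel-verified Lean document; each statement's English description precedes it below -/
import Mathlib

section
/- Let f satisfy f(u) ≤ f'(0)u for u ≥ 0, and let φ > 0 on (0,ℓ) be an eigenfunction of −φ'' + βφ' − f'(0)φ = ζ₁φ with ζ₁ > 0 and k,m > 0 such that xφ'(x) ≤ kφ(x) on [0,h₀] and φ'(x) ≤ mφ(x) on [0,x₀], φ' < 0 on [x₀,h₀], with β ≤ 0. Then for all sufficiently small σ > 0, the function w(t,x) = M e^{−σt} φ(x/s(t)) with s(t) = 1 + 2σ − σe^{−σt} satisfies w_t − w_{xx} + βw_x − f(w) > 0 for t > 0, 0 < x < h₀ s(t). -/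
/-!
Write `a = s(t)`, `E = e^{-σt}` and `ξ = x / a`. By the chain rule, at `ξ`,
`w_t - w_xx + β w_x = M E / a² · (-σ a² φ - σ² E a ξ φ' - φ'' + β a φ')`.
Eliminating `φ''` by the eigenvalue equation and bounding `f(w) ≤ f'(0) w`, the residual is
at least `M E / a²` times `ζ₁ φ + f'(0) φ (1 - a²) - σ a² φ - σ² E a ξ φ' + β φ' (a - 1)`.
As `1 ≤ a ≤ 1 + 2σ`, every term but `ζ₁ φ` is `O(σ) φ`: `ξ φ' ≤ k φ` controls the stretching
term and, as `β ≤ 0`, `φ' ≤ m φ` (automatic where `φ' < 0`) the drift term. So the bracket is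
at least `φ (ζ₁ - σ K)` with `K = 8 |f'(0)| + 9 + 3k + 2 |β| m`, positive once `σ < ζ₁ / K`.
-/

open Real Set

noncomputable def dilation (σ t : ℝ) : ℝ := 1 + 2 * σ - σ * exp (-σ * t)

noncomputable def profile (M σ : ℝ) (s φ : ℝ → ℝ) (t x : ℝ) : ℝ :=
  M * exp (-σ * t) * φ (x / s t)

lemma hasDerivAt_dilation (σ t : ℝ) : HasDerivAt (dilation σ) (σ ^ 2 * exp (-σ * t)) t := by
  have h := (((hasDerivAt_id t).const_mul (-σ)).exp.const_mul σ).const_sub (1 + 2 * σ)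
  refine h.congr_deriv ?_
  simp only [id, mul_one]
  ring

lemma one_le_dilation {σ t : ℝ} (hσ : 0 ≤ σ) (ht : 0 ≤ t) : 1 ≤ dilation σ t := by
  have : exp (-σ * t) ≤ 1 := exp_le_one_iff.mpr (by nlinarith)
  unfold dilation
  nlinarith

lemma dilation_le {σ : ℝ} (hσ : 0 ≤ σ) (t : ℝ) : dilation σ t ≤ 1 + 2 * σ := by
  unfold dilation
  nlinarith [exp_pos (-σ * t)]

lemma deriv_const_mul_comp_div (φ : ℝ → ℝ) (C a : ℝ) :
    deriv (fun y => C * φ (y / a)) = fun y => C / a * deriv φ (y / a) := by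
  funext y
  simp_rw [deriv_const_mul_field', div_eq_inv_mul, deriv_comp_mul_left, smul_eq_mul]
  ring

lemma deriv_profile (M σ : ℝ) (s φ : ℝ → ℝ) (t : ℝ) :
    deriv (profile M σ s φ t) = fun x => M * exp (-σ * t) / s t * deriv φ (x / s t) :=
  deriv_const_mul_comp_div φ _ _

lemma deriv_deriv_profile (M σ : ℝ) (s φ : ℝ → ℝ) (t x : ℝ) :
    deriv (deriv (profile M σ s φ t)) x
      = M * exp (-σ * t) / s t ^ 2 * deriv (deriv φ) (x / s t) := by
  rw [deriv_profile, deriv_const_mul_comp_div]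
  ring

lemma hasDerivAt_profile_time {M σ x t s' : ℝ} {s φ : ℝ → ℝ}
    (hφ : DifferentiableAt ℝ φ (x / s t)) (hs : HasDerivAt s s' t) (hst : s t ≠ 0) :
    HasDerivAt (fun τ => profile M σ s φ τ x)
      (M * exp (-σ * t) * (-σ * φ (x / s t) - x * s' / s t ^ 2 * deriv φ (x / s t))) t := by
  have hE := ((hasDerivAt_id t).const_mul (-σ)).exp.const_mul M
  have hφs := hφ.hasDerivAt.comp t ((hasDerivAt_const t x).div hs hst)
  refine (hE.mul hφs).congr_deriv ?_
  simp only [id, mul_one, Function.comp_apply, Pi.div_apply]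
  ring

lemma residual_lower_bound {σ E a P Q ξ k m β c ζ₁ : ℝ} (hσ : 0 < σ) (hσ1 : σ ≤ 1)
    (hE0 : 0 ≤ E) (hE1 : E ≤ 1) (ha1 : 1 ≤ a) (ha : a ≤ 1 + 2 * σ) (hP : 0 ≤ P)
    (hk : 0 ≤ k) (hm : 0 ≤ m) (hβ : β ≤ 0) (hξQ : ξ * Q ≤ k * P) (hQ : Q ≤ m * P) :
    P * (ζ₁ - σ * (8 * |c| + 9 + 3 * k + 2 * |β| * m))
      ≤ ζ₁ * P + c * P * (1 - a ^ 2) - σ * P * a ^ 2 - σ ^ 2 * E * a * (ξ * Q)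
        + β * Q * (a - 1) := by
  have ha2 : 0 ≤ a ^ 2 - 1 := by nlinarith
  have ha2' : a ^ 2 - 1 ≤ 8 * σ := by nlinarith
  have hreaction : -(8 * σ * |c|) ≤ c * (1 - a ^ 2) := by
    nlinarith [mul_nonneg (sub_nonneg.2 (le_abs_self c)) ha2,
      mul_nonneg (abs_nonneg c) (sub_nonneg.2 ha2')]
  have hdiffusion : a ^ 2 ≤ 9 := by nlinarith
  have hstretch : σ ^ 2 * E * a * (ξ * Q) ≤ 3 * σ * k * P := by
    have hcoef : σ ^ 2 * E * a ≤ 3 * σ := by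
      have hσE : σ * E ≤ 1 := by nlinarith
      have : σ * E * a ≤ 3 := by
        nlinarith [mul_nonneg (sub_nonneg.2 hσE) (by linarith : 0 ≤ a)]
      nlinarith [mul_le_mul_of_nonneg_left this hσ.le]
    nlinarith [mul_nonneg hk hP,
      mul_le_mul_of_nonneg_left hξQ (by positivity : 0 ≤ σ ^ 2 * E * a)]
  have hdrift : -(2 * σ * |β| * m * P) ≤ β * Q * (a - 1) := by
    rw [abs_of_nonpos hβ]
    have : β * (m * P) ≤ β * Q := mul_le_mul_of_nonpos_left hQ hβ
    nlinarith [mul_nonneg (mul_nonneg (neg_nonneg.mpr hβ) hm) hP]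
  nlinarith [mul_le_mul_of_nonneg_right hreaction hP,
    mul_le_mul_of_nonneg_left hdiffusion (mul_nonneg hσ.le hP)]

lemma deriv_le_mul_self_of_mem_Icc {φ : ℝ → ℝ} {m x₀ h₀ x : ℝ} (hm : 0 ≤ m)
    (hφx : 0 < φ x) (hx : x ∈ Icc 0 h₀) (hmφ : ∀ y ∈ Icc 0 x₀, deriv φ y ≤ m * φ y)
    (hφ' : ∀ y ∈ Icc x₀ h₀, deriv φ y < 0) : deriv φ x ≤ m * φ x := by
  rcases le_or_gt x x₀ with hxx₀ | hxx₀
  · exact hmφ x ⟨hx.1, hxx₀⟩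
  · exact (hφ' x ⟨hxx₀.le, hx.2⟩).le.trans (mul_nonneg hm hφx.le)

lemma profile_supersolution {f φ : ℝ → ℝ} {β M ζ₁ k m c σ t x ξ : ℝ}
    (hφ : Differentiable ℝ φ) (hfle : ∀ u ≥ (0:ℝ), f u ≤ c * u) (hβ : β ≤ 0)
    (hM : 0 < M) (hk : 0 ≤ k) (hm : 0 ≤ m) (hσ : 0 < σ) (hσ1 : σ ≤ 1)
    (hσK : σ * (8 * |c| + 9 + 3 * k + 2 * |β| * m) < ζ₁) (ht : 0 ≤ t)
    (hξ : x / dilation σ t = ξ) (hφξ : 0 < φ ξ) (hkξ : ξ * deriv φ ξ ≤ k * φ ξ)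
    (hmξ : deriv φ ξ ≤ m * φ ξ)
    (hode : -(deriv (deriv φ) ξ) + β * deriv φ ξ = (ζ₁ + c) * φ ξ) :
    0 < deriv (fun τ => profile M σ (dilation σ) φ τ x) t
      - deriv (deriv (profile M σ (dilation σ) φ t)) x
      + β * deriv (profile M σ (dilation σ) φ t) x - f (profile M σ (dilation σ) φ t x) := by
  have ha1 : 1 ≤ dilation σ t := one_le_dilation hσ.le ht
  rw [(hasDerivAt_profile_time (hφ _) (hasDerivAt_dilation σ t) (by linarith)).deriv,
    deriv_deriv_profile, deriv_profile]
  set a := dilation σ t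
  have hx : x = ξ * a := by rw [← hξ, div_mul_cancel₀ x (by linarith : a ≠ 0)]
  have hwx : profile M σ (dilation σ) φ t x = M * exp (-σ * t) * φ ξ := by
    rw [profile, hξ]
  have hbound := residual_lower_bound (c := c) (ζ₁ := ζ₁) hσ hσ1 (exp_pos (-σ * t)).le
    (exp_le_one_iff.2 (by nlinarith)) ha1 (dilation_le hσ.le t) hφξ.le hk hm hβ hkξ hmξ
  have hresidual := mul_pos (by positivity : 0 < M * exp (-σ * t) / a ^ 2)
    ((mul_pos hφξ (by linarith)).trans_le hbound)
  have hreaction := hfle (profile M σ (dilation σ) φ t x) (by rw [hwx]; positivity)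
  refine (add_pos_of_pos_of_nonneg hresidual (sub_nonneg.2 hreaction)).trans_eq ?_
  rw [hwx, hξ, show deriv (deriv φ) ξ = β * deriv φ ξ - (ζ₁ + c) * φ ξ by linarith, hx]
  field_simp
  ring

theorem stmt3_general (f : ℝ → ℝ) (β h₀ M ζ₁ k m x₀ : ℝ)
    (hfle : ∀ u ≥ (0:ℝ), f u ≤ deriv f 0 * u)
    (hβ : β ≤ 0) (hM : 0 < M) (hζ₁ : 0 < ζ₁)
    (φ : ℝ → ℝ) (hφ2 : ContDiff ℝ 2 φ)
    (hφpos : ∀ x ∈ Ioo (0:ℝ) h₀, 0 < φ x)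
    (hode : ∀ x ∈ Icc (0:ℝ) h₀,
      -(deriv (deriv φ) x) + β * deriv φ x = (ζ₁ + deriv f 0) * φ x)
    (hk : 0 < k) (hm : 0 < m)
    (hkφ : ∀ x ∈ Icc (0:ℝ) h₀, x * deriv φ x ≤ k * φ x)
    (hmφ : ∀ x ∈ Icc (0:ℝ) x₀, deriv φ x ≤ m * φ x)
    (hφ' : ∀ x ∈ Icc x₀ h₀, deriv φ x < 0) :
    ∃ σ₀ > (0:ℝ), ∀ σ, 0 < σ → σ < σ₀ →
      ∀ s w : ℝ → ℝ → ℝ,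
        (∀ t x, s t x = 1 + 2 * σ - σ * exp (-σ * t)) →
        (∀ t x, w t x = M * exp (-σ * t) * φ (x / s t x)) →
        ∀ t > (0:ℝ), ∀ x, 0 < x → x < h₀ * s t x →
          0 < deriv (fun τ => w τ x) t - deriv (deriv (fun y => w t y)) x
              + β * deriv (fun y => w t y) x - f (w t x) := by
  set K := 8 * |deriv f 0| + 9 + 3 * k + 2 * |β| * m
  have hK : 0 < K := by positivity
  refine ⟨min 1 (ζ₁ / K), lt_min one_pos (div_pos hζ₁ hK), ?_⟩
  intro σ hσ hσ₀ s w hs hw t ht x hx hxh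
  have hw' : w = profile M σ (dilation σ) φ := by
    funext t' y
    rw [hw, hs]
    rfl
  subst hw'
  have ha1 : 1 ≤ dilation σ t := one_le_dilation hσ.le ht.le
  have hξ : x / dilation σ t ∈ Ioo 0 h₀ := by
    rw [hs] at hxh
    exact ⟨div_pos hx (by linarith), (div_lt_iff₀ (by linarith)).2 hxh⟩
  have hξ' := Ioo_subset_Icc_self hξ
  exact profile_supersolution (hφ2.differentiable (by norm_num)) hfle hβ hM hk.le hm.le hσ
    (hσ₀.le.trans (min_le_left _ _)) ((lt_div_iff₀ hK).1 (hσ₀.trans_le (min_le_right _ _)))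
    ht.le rfl (hφpos _ hξ) (hkφ _ hξ')
    (deriv_le_mul_self_of_mem_Icc hm.le (hφpos _ hξ) hξ' hmφ hφ') (hode _ hξ')

theorem stmt3 (f : ℝ → ℝ) (β h₀ M ζ₁ k m x₀ : ℝ)
    (hf : ContDiffOn ℝ 1 f (Ici 0))
    (hfle : ∀ u ≥ (0:ℝ), f u ≤ deriv f 0 * u)
    (hβ : β ≤ 0) (hh₀ : 0 < h₀) (hM : 0 < M) (hζ₁ : 0 < ζ₁)
    (φ : ℝ → ℝ) (hφ2 : ContDiff ℝ 2 φ)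
    (hφpos : ∀ x ∈ Ioo (0:ℝ) h₀, 0 < φ x)
    (hode : ∀ x ∈ Icc (0:ℝ) h₀,
      -(deriv (deriv φ) x) + β * deriv φ x = (ζ₁ + deriv f 0) * φ x)
    (hk : 0 < k) (hm : 0 < m) (hx₀ : 0 < x₀) (hx₀h : x₀ < h₀)
    (hkφ : ∀ x ∈ Icc (0:ℝ) h₀, x * deriv φ x ≤ k * φ x)
    (hmφ : ∀ x ∈ Icc (0:ℝ) x₀, deriv φ x ≤ m * φ x)
    (hφ' : ∀ x ∈ Icc x₀ h₀, deriv φ x < 0) :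
    ∃ σ₀ > (0:ℝ), ∀ σ, 0 < σ → σ < σ₀ →
      ∀ s w : ℝ → ℝ → ℝ,
        (∀ t x, s t x = 1 + 2 * σ - σ * exp (-σ * t)) →
        (∀ t x, w t x = M * exp (-σ * t) * φ (x / s t x)) →
        ∀ t > (0:ℝ), ∀ x, 0 < x → x < h₀ * s t x →
          0 < deriv (fun τ => w τ x) t - deriv (deriv (fun y => w t y)) x
              + β * deriv (fun y => w t y) x - f (w t x) :=
  stmt3_general f β h₀ M ζ₁ k m x₀ hfle hβ hM hζ₁ φ hφ2 hφpos hode hk hm hkφ hmφ hφ'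
end

section
/- Let ṽ : [0,∞) → ℝ be an increasing solution of v'' − βv' + f(v) = 0 with ṽ(∞) = 1, where f is C¹, f(1) = 0, f'(1) < 0. Then there exist positive constants K and ρ such that 1 − ṽ(z) ≤ K e^{−ρz} for all z ≥ 0. -/
/-! With `u = 1 - v`, the equation and the linear bound `f(y) ≥ c (1 - y)` near `1` (from `f'(1) < 0`)
give `u'' ≥ β u' + c u` on some `[Z, ∞)`. Factor `λ² - βλ - c = (λ - μ)(λ + ρ)` with `μ, ρ > 0`:
then `g = u' + ρ u` satisfies `g' ≥ μ g`, so `g` would grow like `e^{μ z}` if it were ever positive,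
which is impossible as `g ≤ ρ u` stays bounded. Hence `u' ≤ -ρ u`, and `u` decays like `e^{-ρ z}`. -/

open Real Set Filter Topology

lemma le_mul_exp_of_deriv_le {u u' : ℝ → ℝ} {K a : ℝ} (hu : ∀ z ≥ a, HasDerivAt u (u' z) z)
    (h : ∀ z ≥ a, u' z ≤ K * u z) {z : ℝ} (hz : a ≤ z) : u z ≤ u a * exp (K * (z - a)) := by
  have hw : ∀ z ≥ a, HasDerivAt (fun z ↦ exp (-K * z) * u z) (exp (-K * z) * (u' z - K * u z)) z :=
    fun z hz ↦ (((hasDerivAt_id' z).const_mul (-K)).exp.mul (hu z hz)).congr_deriv (by ring)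
  have hanti : AntitoneOn (fun z ↦ exp (-K * z) * u z) (Ici a) := by
    refine antitoneOn_of_hasDerivWithinAt_nonpos (convex_Ici a)
      (fun x hx ↦ (hw x hx).continuousAt.continuousWithinAt)
      (fun x hx ↦ (hw x (interior_subset hx)).hasDerivWithinAt) fun x hx ↦ ?_
    exact mul_nonpos_of_nonneg_of_nonpos (exp_pos _).le
      (sub_nonpos.mpr (h x (interior_subset hx)))
  have hle := hanti self_mem_Ici (mem_Ici.mpr hz) hz
  calc u z = exp (K * z) * (exp (-K * z) * u z) := by
        rw [← mul_assoc, ← exp_add, neg_mul, add_neg_cancel, exp_zero, one_mul]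
    _ ≤ exp (K * z) * (exp (-K * a) * u a) := mul_le_mul_of_nonneg_left hle (exp_pos _).le
    _ = u a * exp (K * (z - a)) := by rw [mul_sub, sub_eq_add_neg, ← neg_mul, exp_add]; ring

lemma nonpos_of_mul_le_deriv {g g' : ℝ → ℝ} {μ a C : ℝ} (hμ : 0 < μ)
    (hg : ∀ z ≥ a, HasDerivAt g (g' z) z) (h : ∀ z ≥ a, μ * g z ≤ g' z)
    (hC : ∀ z ≥ a, g z ≤ C) : g a ≤ 0 := by
  by_contra! hpos
  have hgrow : ∀ z ≥ a, g a * exp (μ * (z - a)) ≤ g z := fun z hz ↦ by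
    have := le_mul_exp_of_deriv_le (u := fun z ↦ -g z) (K := μ) (fun z hz ↦ (hg z hz).neg)
      (fun z hz ↦ by linarith [h z hz]) hz
    linarith
  have htend : Tendsto (fun z ↦ g a * exp (μ * (z - a))) atTop atTop :=
    (tendsto_exp_atTop.comp ((tendsto_atTop_add_const_right atTop (-a) tendsto_id).const_mul_atTop
      hμ)).const_mul_atTop hpos
  obtain ⟨z, hbig, hz⟩ := ((htend.eventually_gt_atTop C).and (eventually_ge_atTop a)).exists
  linarith [hgrow z hz, hC z hz]

lemma exists_pos_sub_eq_mul_eq (β : ℝ) {c : ℝ} (hc : 0 < c) :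
    ∃ ρ > 0, ∃ μ > 0, μ - ρ = β ∧ μ * ρ = c := by
  set s := √(β ^ 2 + 4 * c)
  have hs2 : s ^ 2 = β ^ 2 + 4 * c := sq_sqrt (by positivity)
  have hβs : |β| < s := by
    rw [← sqrt_sq_eq_abs]; exact sqrt_lt_sqrt (sq_nonneg β) (by linarith)
  refine ⟨(s - β) / 2, by linarith [le_abs_self β], (s + β) / 2, by linarith [neg_abs_le β],
    by ring, by linear_combination hs2 / 4⟩

lemma le_mul_exp_of_second_order_ineq {u u' u'' : ℝ → ℝ} {β c a : ℝ} (hc : 0 < c)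
    (hu : ∀ z ≥ a, HasDerivAt u (u' z) z) (hu' : ∀ z ≥ a, HasDerivAt u' (u'' z) z)
    (hineq : ∀ z ≥ a, β * u' z + c * u z ≤ u'' z) (hdec : ∀ z ≥ a, u' z ≤ 0) :
    ∃ ρ > 0, ∀ z ≥ a, u z ≤ u a * exp (-ρ * (z - a)) := by
  obtain ⟨ρ, hρ, μ, hμ, hβ, hc⟩ := exists_pos_sub_eq_mul_eq β hc
  have hbdd : ∀ z ≥ a, u z ≤ u a := fun z hz ↦ by
    simpa using le_mul_exp_of_deriv_le (K := 0) hu (fun z hz ↦ by simpa using hdec z hz) hz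
  have hfirst : ∀ z ≥ a, u' z ≤ -ρ * u z := fun z hz ↦ by
    have := nonpos_of_mul_le_deriv (g := fun z ↦ u' z + ρ * u z) (C := ρ * u a) hμ
      (fun w hw ↦ (hu' w (hz.trans hw)).add ((hu w (hz.trans hw)).const_mul ρ))
      (fun w hw ↦ by linear_combination hineq w (hz.trans hw) + u' w * hβ + u w * hc)
      (fun w hw ↦ by nlinarith [hdec w (hz.trans hw), hbdd w (hz.trans hw)])
    linarith
  exact ⟨ρ, hρ, fun z hz ↦ le_mul_exp_of_deriv_le hu hfirst hz⟩

lemma eventually_add_mul_sub_le {f : ℝ → ℝ} {d c y₀ : ℝ} (hf : HasDerivAt f d y₀) (hc : c < -d) :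
    ∀ᶠ y in 𝓝 y₀, y ≤ y₀ → f y₀ + c * (y₀ - y) ≤ f y := by
  filter_upwards [(hasDerivAt_iff_isLittleO.mp hf).def (sub_pos.mpr hc)] with y hy hyy₀
  rw [Real.norm_eq_abs, Real.norm_eq_abs, abs_of_nonpos (sub_nonpos.mpr hyy₀), smul_eq_mul] at hy
  linarith [(abs_le.mp hy).1]

theorem stmt8_general (f : ℝ → ℝ) (β : ℝ) (v : ℝ → ℝ)
    (hf1 : f 1 = 0)
    (hf'1 : deriv f 1 < 0)
    (hv2 : ContDiff ℝ 2 v)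
    (hode : ∀ z ≥ (0:ℝ), deriv (deriv v) z - β * deriv v z + f (v z) = 0)
    (hrange : ∀ z ≥ (0:ℝ), 0 ≤ v z ∧ v z < 1)
    (hv' : ∀ z ≥ (0:ℝ), 0 < deriv v z)
    (hlim : Tendsto v atTop (nhds 1)) :
    ∃ K > (0:ℝ), ∃ ρ > (0:ℝ), ∀ z ≥ (0:ℝ), 1 - v z ≤ K * exp (-ρ * z) := by
  have hfd : HasDerivAt f (deriv f 1) 1 := (differentiableAt_of_deriv_ne_zero hf'1.ne).hasDerivAt
  obtain ⟨Z₀, hZ₀⟩ := eventually_atTop.mp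
    (hlim.eventually (eventually_add_mul_sub_le hfd (c := -deriv f 1 / 2) (by linarith)))
  set Z := max Z₀ 0
  have hZ : ∀ z ≥ Z, 0 ≤ z := fun z hz ↦ (le_max_right _ _).trans hz
  obtain ⟨ρ, hρ, hdecay⟩ := le_mul_exp_of_second_order_ineq (u := fun z ↦ 1 - v z)
    (u'' := fun z ↦ -deriv (deriv v) z) (β := β) (a := Z) (by linarith : 0 < -deriv f 1 / 2)
    (fun z _ ↦ ((hv2.differentiable (by norm_num) z).hasDerivAt.const_sub 1))
    (fun z _ ↦ (hv2.differentiable_deriv_two z).hasDerivAt.neg)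
    (fun z hz ↦ by
      linarith [hZ₀ z ((le_max_left _ _).trans hz) (hrange z (hZ z hz)).2.le, hode z (hZ z hz)])
    (fun z hz ↦ by linarith [hv' z (hZ z hz)])
  refine ⟨exp (ρ * Z), exp_pos _, ρ, hρ, fun z hz ↦ ?_⟩
  rcases le_total Z z with hzZ | hzZ
  · calc 1 - v z ≤ (1 - v Z) * exp (-ρ * (z - Z)) := hdecay z hzZ
      _ ≤ 1 * exp (-ρ * (z - Z)) := by gcongr; linarith [(hrange Z (hZ Z le_rfl)).1]
      _ = exp (ρ * Z) * exp (-ρ * z) := by rw [← exp_add]; ring_nf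
  · calc 1 - v z ≤ 1 := by linarith [(hrange z hz).1]
      _ ≤ exp (ρ * Z) * exp (-ρ * z) := by rw [← exp_add]; exact one_le_exp (by nlinarith)

theorem stmt8 (f : ℝ → ℝ) (β : ℝ) (v : ℝ → ℝ)
    (hf : ContDiffOn ℝ 1 f (Ici 0))
    (hf0 : f 0 = 0) (hf1 : f 1 = 0)
    (hfsign : ∀ u > (0:ℝ), u ≠ 1 → 0 < (1 - u) * f u)
    (hf'0 : 0 < deriv f 0) (hf'1 : deriv f 1 < 0)
    (hβ : |β| < 2 * Real.sqrt (deriv f 0))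
    (hv2 : ContDiff ℝ 2 v)
    (hode : ∀ z ≥ (0:ℝ), deriv (deriv v) z - β * deriv v z + f (v z) = 0)
    (hrange : ∀ z ≥ (0:ℝ), 0 ≤ v z ∧ v z < 1)
    (hv' : ∀ z ≥ (0:ℝ), 0 < deriv v z)
    (hlim : Tendsto v atTop (nhds 1)) :
    ∃ K > (0:ℝ), ∃ ρ > (0:ℝ), ∀ z ≥ (0:ℝ), 1 - v z ≤ K * exp (-ρ * z) :=
  stmt8_general f β v hf1 hf'1 hv2 hode hrange hv' hlim
end

section
/- Let f'(0) > 0, c₀ = 2√(f'(0)), β ≥ c₀, and let f satisfy f(u) ≤ f'(0)u for u ≥ 0. Let h₀ > 0 and choose δ > 0 small so that π²/(h₀²(1+δ)²) ≥ 4δ + βh₀δ². Set g(t) = h₀(1 + δ − (δ/2)e^{−δt}), ε = (h₀²δ²/(πμ))(1 + δ/2), and w(t,x) = ε e^{−δt} e^{(β/2)(x−g(t))} cos(πx/(2g(t))) for 0 ≤ x ≤ g(t). Then w(t, g(t)) = 0, g'(t) ≥ −μ w_x(t, g(t)), and w_t − w_{xx} + β w_x − f(w) ≥ 0 for t > 0,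 0 ≤ x ≤ g(t). -/
/-!
The barrier is `w = ε e^{-δt} e^{β(x-g)/2} cos θ` with `θ = πx/(2g)`. The factor `e^{βx/2}` removes
the drift: `w_t - w_xx + β w_x` equals `(π²/(4g²) + β²/4 - δ - βg'/2) w` plus a term
`(πxg'/(2g²)) sin θ ≥ 0` coming from the motion of the front. Since `f(w) ≤ f'(0) w ≤ (β²/4) w`,
the inequality reduces to `δ + βg'/2 ≤ π²/(4g²)`, which is the smallness condition on `δ` because
`g' ≤ h₀δ²/2` and `g ≤ h₀(1+δ)`. The Stefan condition `g' ≥ -μ w_x(g)` reduces to `g ≥ h₀(1+δ/2)`,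
which is how `ε` was chosen.
-/

open Real Set

noncomputable section

lemma le_sq_div_four_of_two_mul_sqrt_le {d β : ℝ} (h : 2 * √d ≤ β) : d ≤ β ^ 2 / 4 := by
  have := (Real.sqrt_le_iff.mp (show √d ≤ β / 2 by linarith)).2
  linarith

lemma pi_mul_div_two_mul_mem_Icc {x G : ℝ} (hx : 0 ≤ x) (hxG : x ≤ G) :
    π * x / (2 * G) ∈ Icc 0 (π / 2) := by
  rcases (hx.trans hxG).eq_or_lt with rfl | hG
  · simpa using pi_div_two_pos.le
  · refine ⟨by positivity, ?_⟩
    rw [div_le_iff₀ (by positivity)]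
    nlinarith [pi_pos]

section ExpCos

variable (c a b k : ℝ)

lemma hasDerivAt_exp_mul_cos (y : ℝ) :
    HasDerivAt (fun y => c * exp (a * (y - b)) * cos (k * y))
      (c * exp (a * (y - b)) * (a * cos (k * y) - k * sin (k * y))) y := by
  have hlin : HasDerivAt (fun y => a * (y - b)) a y := by
    simpa using ((hasDerivAt_id y).sub_const b).const_mul a
  have hcos : HasDerivAt (fun y => cos (k * y)) (-sin (k * y) * k) y := by
    simpa using ((hasDerivAt_id y).const_mul k).cos
  exact ((hlin.exp.const_mul c).mul hcos).congr_deriv (by ring)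

lemma deriv_exp_mul_cos :
    deriv (fun y => c * exp (a * (y - b)) * cos (k * y)) =
      fun y => c * exp (a * (y - b)) * (a * cos (k * y) - k * sin (k * y)) :=
  funext fun y => (hasDerivAt_exp_mul_cos c a b k y).deriv

lemma deriv_deriv_exp_mul_cos (y : ℝ) :
    deriv (deriv fun y => c * exp (a * (y - b)) * cos (k * y)) y =
      c * exp (a * (y - b)) * ((a ^ 2 - k ^ 2) * cos (k * y) - 2 * a * k * sin (k * y)) := by
  have hlin : HasDerivAt (fun y => a * (y - b)) a y := by
    simpa using ((hasDerivAt_id y).sub_const b).const_mul a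
  have hk : HasDerivAt (fun y => k * y) k y := by simpa using (hasDerivAt_id y).const_mul k
  rw [deriv_exp_mul_cos]
  refine ((hlin.exp.const_mul c).mul ((hk.cos.const_mul a).sub (hk.sin.const_mul k))).deriv.trans ?_
  simp only [Pi.sub_apply]
  ring

end ExpCos

def frontSubsolution (ε δ β : ℝ) (g : ℝ → ℝ) (t x : ℝ) : ℝ :=
  ε * exp (-δ * t) * exp (β / 2 * (x - g t)) * cos (π * x / (2 * g t))

section FrontSubsolution

variable {ε δ β : ℝ} {g : ℝ → ℝ} {t : ℝ}

lemma frontSubsolution_eq_exp_mul_cos (ε δ β : ℝ) (g : ℝ → ℝ) (t : ℝ) :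
    frontSubsolution ε δ β g t =
      fun x => ε * exp (-δ * t) * exp (β / 2 * (x - g t)) * cos (π / (2 * g t) * x) := by
  funext x
  simp only [frontSubsolution, div_mul_eq_mul_div]

lemma frontSubsolution_at_front (hg : g t ≠ 0) : frontSubsolution ε δ β g t (g t) = 0 := by
  rw [frontSubsolution, mul_div_mul_comm, div_self hg, mul_one, cos_pi_div_two, mul_zero]

lemma frontSubsolution_nonneg (hε : 0 ≤ ε) {x : ℝ} (hx : 0 ≤ x) (hxg : x ≤ g t) :
    0 ≤ frontSubsolution ε δ β g t x :=
  mul_nonneg (by positivity) (cos_nonneg_of_mem_Icc (Icc_subset_Icc (by linarith [pi_pos]) le_rfl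
    (pi_mul_div_two_mul_mem_Icc hx hxg)))

lemma deriv_frontSubsolution_at_front (hg : g t ≠ 0) :
    deriv (frontSubsolution ε δ β g t) (g t) = -(ε * exp (-δ * t) * π / (2 * g t)) := by
  have hphase : π / (2 * g t) * g t = π / 2 := by field_simp
  rw [frontSubsolution_eq_exp_mul_cos, deriv_exp_mul_cos]
  dsimp only
  rw [hphase, sub_self, mul_zero, exp_zero, cos_pi_div_two, sin_pi_div_two]
  ring

lemma hasDerivAt_frontSubsolution_time {g' : ℝ} (hg : HasDerivAt g g' t) (hgt : g t ≠ 0)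
    (x : ℝ) :
    HasDerivAt (fun τ => frontSubsolution ε δ β g τ x)
      (ε * exp (-δ * t) * exp (β / 2 * (x - g t)) *
        ((-δ - β / 2 * g') * cos (π * x / (2 * g t))
          + π * x * g' / (2 * g t ^ 2) * sin (π * x / (2 * g t)))) t := by
  have hdecay : HasDerivAt (fun τ => -δ * τ) (-δ) t := by
    simpa using (hasDerivAt_id t).const_mul (-δ)
  have hdrift : HasDerivAt (fun τ => β / 2 * (x - g τ)) (β / 2 * (0 - g')) t :=
    ((hasDerivAt_const t x).sub hg).const_mul (β / 2)
  have hphase : HasDerivAt (fun τ => π * x / (2 * g τ))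
      ((0 * (2 * g t) - π * x * (2 * g')) / (2 * g t) ^ 2) t :=
    (hasDerivAt_const t (π * x)).div (hg.const_mul 2) (by simpa using hgt)
  refine (((hdecay.exp.const_mul ε).mul hdrift.exp).mul hphase.cos).congr_deriv ?_
  simp only [Pi.mul_apply]
  field_simp
  ring

lemma frontSubsolution_residual {g' : ℝ} (hg : HasDerivAt g g' t) (hgt : g t ≠ 0) (x : ℝ) :
    deriv (fun τ => frontSubsolution ε δ β g τ x) t
        - deriv (deriv (frontSubsolution ε δ β g t)) x
        + β * deriv (frontSubsolution ε δ β g t) x =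
      (π ^ 2 / (4 * g t ^ 2) + β ^ 2 / 4 - δ - β / 2 * g') * frontSubsolution ε δ β g t x
        + ε * exp (-δ * t) * exp (β / 2 * (x - g t)) * (π * x * g' / (2 * g t ^ 2))
          * sin (π * x / (2 * g t)) := by
  rw [(hasDerivAt_frontSubsolution_time hg hgt x).deriv, frontSubsolution_eq_exp_mul_cos,
    deriv_deriv_exp_mul_cos, deriv_exp_mul_cos]
  simp only [div_mul_eq_mul_div]
  field_simp
  ring

lemma residual_sub_frontSubsolution_nonneg {f : ℝ → ℝ} {d g' : ℝ} (hε : 0 ≤ ε)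
    (hg : HasDerivAt g g' t) (hg' : 0 ≤ g') (hgt : g t ≠ 0) (hdβ : d ≤ β ^ 2 / 4)
    (hf : ∀ u ≥ (0 : ℝ), f u ≤ d * u) (hδg : δ + β / 2 * g' ≤ π ^ 2 / (4 * g t ^ 2))
    {x : ℝ} (hx : 0 ≤ x) (hxg : x ≤ g t) :
    0 ≤ deriv (fun τ => frontSubsolution ε δ β g τ x) t
        - deriv (deriv (frontSubsolution ε δ β g t)) x
        + β * deriv (frontSubsolution ε δ β g t) x - f (frontSubsolution ε δ β g t x) := by
  have hw := frontSubsolution_nonneg (δ := δ) (β := β) hε hx hxg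
  have hsin : 0 ≤ sin (π * x / (2 * g t)) := by
    obtain ⟨h0, hπ2⟩ := pi_mul_div_two_mul_mem_Icc hx hxg
    exact sin_nonneg_of_nonneg_of_le_pi h0 (by linarith [pi_pos])
  have hmotion : 0 ≤ ε * exp (-δ * t) * exp (β / 2 * (x - g t)) * (π * x * g' / (2 * g t ^ 2))
      * sin (π * x / (2 * g t)) := by positivity
  have hfw := hf _ hw
  rw [frontSubsolution_residual hg hgt]
  linarith [mul_le_mul_of_nonneg_right hdβ hw, mul_nonneg (sub_nonneg.mpr hδg) hw]

end FrontSubsolution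

def front (h₀ δ t : ℝ) : ℝ := h₀ * (1 + δ - δ / 2 * exp (-δ * t))

section Front

variable {h₀ δ : ℝ}

lemma hasDerivAt_front (h₀ δ t : ℝ) :
    HasDerivAt (front h₀ δ) (h₀ * δ ^ 2 / 2 * exp (-δ * t)) t := by
  have hdecay : HasDerivAt (fun τ => -δ * τ) (-δ) t := by
    simpa using (hasDerivAt_id t).const_mul (-δ)
  exact (((hasDerivAt_const t (1 + δ)).sub (hdecay.exp.const_mul (δ / 2))).const_mul h₀).congr_deriv
    (by ring)

lemma front_le (hh₀ : 0 ≤ h₀) (hδ : 0 ≤ δ) (t : ℝ) : front h₀ δ t ≤ h₀ * (1 + δ) := by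
  have : 0 ≤ h₀ * (δ / 2 * exp (-δ * t)) := by positivity
  rw [front]
  linarith

lemma le_front (hh₀ : 0 ≤ h₀) (hδ : 0 ≤ δ) {t : ℝ} (ht : 0 ≤ t) :
    h₀ * (1 + δ / 2) ≤ front h₀ δ t := by
  have he : exp (-δ * t) ≤ 1 := exp_le_one_iff.mpr (by nlinarith)
  have : 0 ≤ h₀ * (δ / 2 * (1 - exp (-δ * t))) :=
    mul_nonneg hh₀ (mul_nonneg (by positivity) (sub_nonneg.mpr he))
  rw [front]
  linarith

lemma front_pos (hh₀ : 0 < h₀) (hδ : 0 ≤ δ) {t : ℝ} (ht : 0 ≤ t) : 0 < front h₀ δ t :=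
  (by positivity : 0 < h₀ * (1 + δ / 2)).trans_le (le_front hh₀.le hδ ht)

lemma add_mul_deriv_front_le {β : ℝ} (hβ : 0 ≤ β) (hh₀ : 0 < h₀) (hδ : 0 ≤ δ) {t : ℝ}
    (ht : 0 ≤ t) (hsmall : 4 * δ + β * h₀ * δ ^ 2 ≤ π ^ 2 / (h₀ ^ 2 * (1 + δ) ^ 2)) :
    δ + β / 2 * (h₀ * δ ^ 2 / 2 * exp (-δ * t)) ≤ π ^ 2 / (4 * front h₀ δ t ^ 2) := by
  have he : exp (-δ * t) ≤ 1 := exp_le_one_iff.mpr (by nlinarith)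
  calc δ + β / 2 * (h₀ * δ ^ 2 / 2 * exp (-δ * t))
      ≤ (4 * δ + β * h₀ * δ ^ 2) / 4 := by
        nlinarith [mul_le_mul_of_nonneg_left he (by positivity : 0 ≤ β * h₀ * δ ^ 2)]
    _ ≤ π ^ 2 / (4 * (h₀ * (1 + δ)) ^ 2) := by
        rw [show π ^ 2 / (4 * (h₀ * (1 + δ)) ^ 2) = π ^ 2 / (h₀ ^ 2 * (1 + δ) ^ 2) / 4 by
          rw [div_div, mul_pow, mul_comm (4 : ℝ)]]
        linarith
    _ ≤ π ^ 2 / (4 * front h₀ δ t ^ 2) := by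
        have := front_pos hh₀ hδ ht
        gcongr
        exact front_le hh₀.le hδ t

lemma neg_mul_deriv_frontSubsolution_le_deriv_front {μ β : ℝ} (hh₀ : 0 < h₀) (hμ : 0 < μ)
    (hδ : 0 ≤ δ) {t : ℝ} (ht : 0 ≤ t) :
    -μ * deriv (frontSubsolution (h₀ ^ 2 * δ ^ 2 / (π * μ) * (1 + δ / 2)) δ β (front h₀ δ) t)
        (front h₀ δ t) ≤ deriv (front h₀ δ) t := by
  have hg := front_pos hh₀ hδ ht
  rw [deriv_frontSubsolution_at_front hg.ne', (hasDerivAt_front h₀ δ t).deriv, neg_mul_neg]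
  calc μ * (h₀ ^ 2 * δ ^ 2 / (π * μ) * (1 + δ / 2) * exp (-δ * t) * π / (2 * front h₀ δ t))
      = h₀ * δ ^ 2 * exp (-δ * t) * (h₀ * (1 + δ / 2)) / (2 * front h₀ δ t) := by
        field_simp
    _ ≤ h₀ * δ ^ 2 * exp (-δ * t) * front h₀ δ t / (2 * front h₀ δ t) := by
        gcongr
        exact le_front hh₀.le hδ ht
    _ = h₀ * δ ^ 2 / 2 * exp (-δ * t) := by
        field_simp

end Front

theorem stmt12_general (f : ℝ → ℝ) (β h₀ μ δ : ℝ)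
    (hβ : 2 * Real.sqrt (deriv f 0) ≤ β)
    (hfle : ∀ u ≥ (0:ℝ), f u ≤ deriv f 0 * u)
    (hh₀ : 0 < h₀) (hμ : 0 < μ) (hδ : 0 < δ)
    (hδsmall : π ^ 2 / (h₀ ^ 2 * (1 + δ) ^ 2) ≥ 4 * δ + β * h₀ * δ ^ 2)
    (g : ℝ → ℝ) (hg : g = fun t => h₀ * (1 + δ - δ / 2 * exp (-δ * t)))
    (ε : ℝ) (hε : ε = h₀ ^ 2 * δ ^ 2 / (π * μ) * (1 + δ / 2))
    (w : ℝ → ℝ → ℝ)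
    (hw : w = fun t x => ε * exp (-δ * t) * exp (β / 2 * (x - g t))
        * cos (π * x / (2 * g t))) :
    (∀ t ≥ (0:ℝ), w t (g t) = 0) ∧
    (∀ t ≥ (0:ℝ), deriv g t ≥ -μ * deriv (fun y => w t y) (g t)) ∧
    (∀ t > (0:ℝ), ∀ x, 0 ≤ x → x ≤ g t →
      0 ≤ deriv (fun τ => w τ x) t - deriv (deriv (fun y => w t y)) x
          + β * deriv (fun y => w t y) x - f (w t x)) := by
  obtain rfl : g = front h₀ δ := hg
  obtain rfl : w = frontSubsolution ε δ β (front h₀ δ) := hw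
  subst hε
  have hβ0 : 0 ≤ β := (by positivity : 0 ≤ 2 * √(deriv f 0)).trans hβ
  refine ⟨fun t ht => frontSubsolution_at_front (front_pos hh₀ hδ.le ht).ne',
    fun t ht => neg_mul_deriv_frontSubsolution_le_deriv_front hh₀ hμ hδ.le ht, ?_⟩
  intro t ht x hx hxg
  exact residual_sub_frontSubsolution_nonneg (by positivity) (hasDerivAt_front h₀ δ t)
    (by positivity) (front_pos hh₀ hδ.le ht.le).ne' (le_sq_div_four_of_two_mul_sqrt_le hβ) hfle
    (add_mul_deriv_front_le hβ0 hh₀ hδ.le ht.le hδsmall) hx hxg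

theorem stmt12 (f : ℝ → ℝ) (β h₀ μ δ : ℝ)
    (hf : ContDiffOn ℝ 1 f (Ici 0))
    (hf'0 : 0 < deriv f 0)
    (hβ : 2 * Real.sqrt (deriv f 0) ≤ β)
    (hfle : ∀ u ≥ (0:ℝ), f u ≤ deriv f 0 * u)
    (hh₀ : 0 < h₀) (hμ : 0 < μ) (hδ : 0 < δ) (hδ1 : δ < 1)
    (hδsmall : π ^ 2 / (h₀ ^ 2 * (1 + δ) ^ 2) ≥ 4 * δ + β * h₀ * δ ^ 2)
    (g : ℝ → ℝ) (hg : g = fun t => h₀ * (1 + δ - δ / 2 * exp (-δ * t)))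
    (ε : ℝ) (hε : ε = h₀ ^ 2 * δ ^ 2 / (π * μ) * (1 + δ / 2))
    (w : ℝ → ℝ → ℝ)
    (hw : w = fun t x => ε * exp (-δ * t) * exp (β / 2 * (x - g t))
        * cos (π * x / (2 * g t))) :
    (∀ t ≥ (0:ℝ), w t (g t) = 0) ∧
    (∀ t ≥ (0:ℝ), deriv g t ≥ -μ * deriv (fun y => w t y) (g t)) ∧
    (∀ t > (0:ℝ), ∀ x, 0 ≤ x → x ≤ g t →
      0 ≤ deriv (fun τ => w τ x) t - deriv (deriv (fun y => w t y)) x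
          + β * deriv (fun y => w t y) x - f (w t x)) :=
  stmt12_general f β h₀ μ δ hβ hfle hh₀ hμ hδ hδsmall g hg ε hε w hw
end
end

section
/- Let f be C¹ on [0,∞) with f(1) = 0 and f'(1) < 0, σ ∈ (0, −f'(1)), ς ∈ (0,1) with σ ≤ −f'(u) for u ∈ [1−ς, 1+ς]. Let ṽ : ℝ → [0,1] be nondecreasing with ṽ'' − βṽ' + f(ṽ) = 0, and let M, T, κ > 0 with Me^{−σT} ≤ ς. Define l̄(t) = κM(e^{−σt} − e^{−σT}) − x* and ū(t,x) = (1 + Me^{−σt})ṽ(x − l̄(t)). Then for t ≥ T and z = x − l̄(t) with ṽ(z) ≥ 1 − ς: ū_t − ū_{xx} + βū_x − f(ū) ≥ Me^{−σt}ṽ(z)[−σ − f'(ṽ(z) + θMe^{−σt}ṽ(z))] ≥ 0, where θ ∈ (0,1) is given by the mean value theorem applied to f between ṽ(z) and (1+Me^{−σt})ṽ(z). -/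
/-!
Write `a = M e^{-σt}` and `z = x - l t`. The spatial derivatives of `u` are `(1 + a) v'(z)` and
`(1 + a) v''(z)`, so the stationary equation turns `u_t - u_xx + β u_x - f(u)` into
`u_t + (1 + a) f(v z) - f((1 + a) v z)`. The mean value theorem gives
`f((1 + a) v z) = f(v z) + a v z f'(c)` with `c ∈ [1 - ς, 1 + ς]`, so the expression equals
`a v z (-σ - f'(c)) + (u_t + σ a v z) + a f(v z)`. Both remainders are nonnegative: `f ≥ 0` on
`[1 - ς, 1]` because `f` decreases there to `f 1 = 0`, and `u_t ≥ -σ a v z` because the shift `l`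
decreases while `v` is nondecreasing.
-/

open Real Set Filter Topology

theorem HasStrictDerivAt.differentiableAt_of_comp {𝕜 : Type*} [NontriviallyNormedField 𝕜]
    [CompleteSpace 𝕜] {v h : 𝕜 → 𝕜} {h' t : 𝕜} (hh : HasStrictDerivAt h h' t) (hh' : h' ≠ 0)
    (hvh : DifferentiableAt 𝕜 (v ∘ h) t) : DifferentiableAt 𝕜 v (h t) := by
  set k := hh.localInverse h h' t hh'
  have hk : k (h t) = t := (hh.eventually_left_inverse hh').self_of_nhds
  have hvhk : DifferentiableAt 𝕜 (v ∘ h ∘ k) (h t) :=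
    (hk ▸ hvh).comp (h t) (hh.to_localInverse hh').hasDerivAt.differentiableAt
  exact hvhk.congr_of_eventuallyEq <| (hh.eventually_right_inverse hh').mono
    fun y hy => congrArg v hy.symm

/-- If `v` is not differentiable at `h t`, neither is `τ ↦ g τ * v (h τ)` at `t`, so both
derivatives are the junk value `0` and the bound reduces to `g' * v (h t) ≤ 0`. -/
theorem le_deriv_mul_comp_of_monotone {g h v : ℝ → ℝ} {g' h' t : ℝ} (hg : HasDerivAt g g' t)
    (hgt : 0 < g t) (hg' : g' ≤ 0) (hh : HasStrictDerivAt h h' t) (hh' : 0 < h')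
    (hv : Monotone v) (hvt : 0 ≤ v (h t)) :
    g' * v (h t) ≤ deriv (fun τ => g τ * v (h τ)) t := by
  by_cases hvd : DifferentiableAt ℝ v (h t)
  · have hd : HasDerivAt (fun τ => g τ * v (h τ)) (g' * v (h t) + g t * (deriv v (h t) * h')) t :=
      hg.mul (hvd.hasDerivAt.comp t hh.hasDerivAt)
    rw [hd.deriv]
    have : 0 ≤ g t * (deriv v (h t) * h') :=
      mul_nonneg hgt.le (mul_nonneg hv.deriv_nonneg hh'.le)
    linarith
  · have hnd : ¬ DifferentiableAt ℝ (fun τ => g τ * v (h τ)) t := by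
      refine fun hd => hvd (hh.differentiableAt_of_comp hh'.ne' ?_)
      have hg0 : ∀ᶠ τ in 𝓝 t, g τ ≠ 0 := hg.continuousAt.eventually_ne hgt.ne'
      refine (hd.div hg.differentiableAt hgt.ne').congr_of_eventuallyEq
        (hg0.mono fun τ hτ => ?_)
      simp [mul_div_cancel_left₀ _ hτ]
    rw [deriv_zero_of_not_differentiableAt hnd]
    exact mul_nonpos_of_nonpos_of_nonneg hg' hvt

theorem exists_mem_Ioo_eq_add_mul_deriv {f : ℝ → ℝ} {p d : ℝ} (hd : 0 < d)
    (hf : ∀ y ∈ Icc p (p + d), DifferentiableAt ℝ f y) :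
    ∃ θ ∈ Ioo (0 : ℝ) 1, f (p + d) = f p + d * deriv f (p + θ * d) := by
  obtain ⟨c, ⟨hpc, hcd⟩, hc⟩ := exists_deriv_eq_slope f (by linarith : p < p + d)
    (fun y hy => (hf y hy).continuousAt.continuousWithinAt)
    (fun y hy => (hf y (Ioo_subset_Icc_self hy)).differentiableWithinAt)
  refine ⟨(c - p) / d, ⟨div_pos (by linarith) hd, (div_lt_one hd).2 (by linarith)⟩, ?_⟩
  rw [div_mul_cancel₀ _ hd.ne', add_sub_cancel, hc, add_sub_cancel_left,
    mul_div_cancel₀ _ hd.ne']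
  ring

theorem nonneg_of_deriv_nonpos_of_right_eq_zero {f : ℝ → ℝ} {a b y : ℝ}
    (hf : ∀ x ∈ Icc a b, DifferentiableAt ℝ f x) (hf' : ∀ x ∈ Ioo a b, deriv f x ≤ 0)
    (hb : f b = 0) (hy : y ∈ Icc a b) : 0 ≤ f y := by
  have hanti : AntitoneOn f (Icc a b) :=
    antitoneOn_of_deriv_nonpos (convex_Icc a b)
      (fun x hx => (hf x hx).continuousAt.continuousWithinAt)
      (fun x hx => (hf x (interior_subset hx)).differentiableWithinAt)
      (fun x hx => hf' x (by rwa [interior_Icc] at hx))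
  exact hb ▸ hanti hy ⟨hy.1.trans hy.2, le_rfl⟩ hy.2

theorem deriv_const_mul_comp_sub_const (v : ℝ → ℝ) (c s : ℝ) :
    deriv (fun y => c * v (y - s)) = fun y => c * deriv v (y - s) := by
  funext y
  rw [deriv_const_mul_field, deriv_comp_sub_const]

theorem hasStrictDerivAt_exp_const_mul (σ t : ℝ) :
    HasStrictDerivAt (fun τ => exp (σ * τ)) (σ * exp (σ * t)) t := by
  simpa [mul_comm] using ((hasStrictDerivAt_id t).const_mul σ).exp

theorem ContDiffOn.differentiableAt_of_pos {f : ℝ → ℝ} (hf : ContDiffOn ℝ 1 f (Ici 0)) {y : ℝ}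
    (hy : 0 < y) : DifferentiableAt ℝ f y :=
  (hf.contDiffAt (Ici_mem_nhds hy)).differentiableAt one_ne_zero

theorem le_deriv_time_supersolution {v : ℝ → ℝ} (hv : Monotone v) (hv0 : ∀ z, 0 ≤ v z)
    {σ M κ T x' x t : ℝ} (hσ : 0 < σ) (hM : 0 < M) (hκ : 0 < κ) :
    -σ * (M * exp (-σ * t)) * v (x - (κ * M * (exp (-σ * t) - exp (-σ * T)) - x')) ≤
      deriv (fun τ => (1 + M * exp (-σ * τ)) *
        v (x - (κ * M * (exp (-σ * τ) - exp (-σ * T)) - x'))) t := by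
  have hexp := hasStrictDerivAt_exp_const_mul (-σ) t
  have hpos : 0 < σ * exp (-σ * t) := mul_pos hσ (exp_pos _)
  have hg : HasDerivAt (fun τ => 1 + M * exp (-σ * τ)) (-σ * (M * exp (-σ * t))) t :=
    ((hexp.const_mul M).const_add 1).hasDerivAt.congr_deriv (by ring)
  have hh : HasStrictDerivAt (fun τ => x - (κ * M * (exp (-σ * τ) - exp (-σ * T)) - x'))
      (κ * M * (σ * exp (-σ * t))) t :=
    ((((hexp.sub (hasStrictDerivAt_const t (exp (-σ * T)))).const_mul (κ * M)).sub
      (hasStrictDerivAt_const t x')).const_sub x).congr_deriv (by ring)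
  exact le_deriv_mul_comp_of_monotone hg (by positivity) (by nlinarith) hh
    (by positivity) hv (hv0 _)

theorem exists_mean_value_reaction {f : ℝ → ℝ} {σ ς a w : ℝ} (hf : ContDiffOn ℝ 1 f (Ici 0))
    (hς1 : ς < 1) (hderiv : ∀ u ∈ Icc (1 - ς) (1 + ς), σ ≤ -deriv f u) (ha : 0 < a)
    (haς : a ≤ ς) (hw : w ∈ Icc (1 - ς) 1) :
    ∃ θ ∈ Ioo (0 : ℝ) 1, f (w + a * w) = f w + a * w * deriv f (w + θ * (a * w)) ∧
      σ ≤ -deriv f (w + θ * (a * w)) := by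
  have hfd : ∀ y ∈ Icc (1 - ς) (1 + ς), DifferentiableAt ℝ f y := fun y hy =>
    hf.differentiableAt_of_pos (by linarith [hy.1])
  have hw0 : 0 < w := by linarith [hw.1]
  have hsub : Icc w (w + a * w) ⊆ Icc (1 - ς) (1 + ς) :=
    Icc_subset_Icc hw.1 (by nlinarith [hw.2])
  obtain ⟨θ, hθ, hmvt⟩ := exists_mem_Ioo_eq_add_mul_deriv (mul_pos ha hw0)
    fun y hy => hfd y (hsub hy)
  refine ⟨θ, hθ, hmvt, hderiv _ (hsub ⟨?_, ?_⟩)⟩ <;> nlinarith [hθ.1, hθ.2, mul_pos ha hw0]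

theorem stmt18_general (f : ℝ → ℝ) (β σ ς M T κ x' : ℝ) (v : ℝ → ℝ)
    (hf : ContDiffOn ℝ 1 f (Ici 0))
    (hf1 : f 1 = 0)
    (hσ : 0 < σ)
    (hς1 : ς < 1)
    (hderiv : ∀ u ∈ Icc (1 - ς) (1 + ς), σ ≤ -deriv f u)
    (hvmono : Monotone v)
    (hvrange : ∀ z, 0 ≤ v z ∧ v z ≤ 1)
    (hvode : ∀ z : ℝ, deriv (deriv v) z - β * deriv v z + f (v z) = 0)
    (hM : 0 < M) (hκ : 0 < κ)
    (hMT : M * exp (-σ * T) ≤ ς)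
    (l : ℝ → ℝ) (hl : l = fun t => κ * M * (exp (-σ * t) - exp (-σ * T)) - x')
    (u : ℝ → ℝ → ℝ)
    (hu : u = fun t x => (1 + M * exp (-σ * t)) * v (x - l t)) :
    ∀ t ≥ T, ∀ x : ℝ, 1 - ς ≤ v (x - l t) →
      ∃ θ ∈ Ioo (0:ℝ) 1,
        M * exp (-σ * t) * v (x - l t) *
            (-σ - deriv f (v (x - l t) + θ * M * exp (-σ * t) * v (x - l t)))
          ≤ deriv (fun τ => u τ x) t - deriv (deriv (fun y => u t y)) x
              + β * deriv (fun y => u t y) x - f (u t x) ∧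
        0 ≤ M * exp (-σ * t) * v (x - l t) *
            (-σ - deriv f (v (x - l t) + θ * M * exp (-σ * t) * v (x - l t))) := by
  intro t ht x hz
  subst hu hl
  have hD := le_deriv_time_supersolution (T := T) (x' := x') (x := x) (t := t) hvmono
    (fun z => (hvrange z).1) hσ hM hκ
  simp only at hz ⊢
  set z := x - (κ * M * (exp (-σ * t) - exp (-σ * T)) - x')
  have ha : 0 < M * exp (-σ * t) := mul_pos hM (exp_pos _)
  have haς : M * exp (-σ * t) ≤ ς :=
    (mul_le_mul_of_nonneg_left (exp_le_exp.2 (by nlinarith)) hM.le).trans hMT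
  have hvz : v z ∈ Icc (1 - ς) 1 := ⟨hz, (hvrange z).2⟩
  have hfv : 0 ≤ f (v z) := nonneg_of_deriv_nonpos_of_right_eq_zero
    (fun y hy => hf.differentiableAt_of_pos (by linarith [hy.1]))
    (fun y hy => by linarith [hderiv y ⟨hy.1.le, by linarith [hy.2]⟩]) hf1 hvz
  obtain ⟨θ, hθ, hmvt, hσc⟩ := exists_mean_value_reaction hf hς1 hderiv ha haς hvz
  rw [← one_add_mul] at hmvt
  refine ⟨θ, hθ, ?_, ?_⟩ <;>
    rw [show θ * M * exp (-σ * t) * v z = θ * (M * exp (-σ * t) * v z) by ring]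
  · rw [deriv_const_mul_comp_sub_const, deriv_const_mul_comp_sub_const]
    linear_combination hD + mul_nonneg ha.le hfv + (1 + M * exp (-σ * t)) * hvode z + hmvt
  · exact mul_nonneg (mul_nonneg ha.le (hvrange z).1) (by linarith)

theorem stmt18 (f : ℝ → ℝ) (β σ ς M T κ x' : ℝ) (v : ℝ → ℝ)
    (hf : ContDiffOn ℝ 1 f (Ici 0))
    (hf1 : f 1 = 0) (hf'1 : deriv f 1 < 0)
    (hσ : 0 < σ) (hσ' : σ < -deriv f 1)
    (hς : 0 < ς) (hς1 : ς < 1)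
    (hderiv : ∀ u ∈ Icc (1 - ς) (1 + ς), σ ≤ -deriv f u)
    (hvmono : Monotone v)
    (hvrange : ∀ z, 0 ≤ v z ∧ v z ≤ 1)
    (hvode : ∀ z : ℝ, deriv (deriv v) z - β * deriv v z + f (v z) = 0)
    (hM : 0 < M) (hT : 0 < T) (hκ : 0 < κ) (hx' : 0 < x')
    (hMT : M * exp (-σ * T) ≤ ς)
    (l : ℝ → ℝ) (hl : l = fun t => κ * M * (exp (-σ * t) - exp (-σ * T)) - x')
    (u : ℝ → ℝ → ℝ)
    (hu : u = fun t x => (1 + M * exp (-σ * t)) * v (x - l t)) :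
    ∀ t ≥ T, ∀ x : ℝ, 1 - ς ≤ v (x - l t) →
      ∃ θ ∈ Ioo (0:ℝ) 1,
        M * exp (-σ * t) * v (x - l t) *
            (-σ - deriv f (v (x - l t) + θ * M * exp (-σ * t) * v (x - l t)))
          ≤ deriv (fun τ => u τ x) t - deriv (deriv (fun y => u t y)) x
              + β * deriv (fun y => u t y) x - f (u t x) ∧
        0 ≤ M * exp (-σ * t) * v (x - l t) *
            (-σ - deriv f (v (x - l t) + θ * M * exp (-σ * t) * v (x - l t))) :=
  stmt18_general f β σ ς M T κ x' v hf hf1 hσ hς1 hderiv hvmono hvrange hvode hM hκ hMT l hl u hu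
end
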